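/- arXiv:1709.10077 — 4 statements merged into one kernel-verified Lean document; each statement's English description precedes it below -/
import Mathlib

section
/- In the abstract execution model, Rule (4) of the must-happen-before deduction system (the overwrite rule) is sound: for any sound relation mhb on events, if a load l reads from a store s1 (ReadsFrom l s1 holds), mhb s1 s2 holds, s2 is a store, and var s2 = var l, then l < s2 in the memory order. -/
/-- `ReadsFrom var IsLoad IsStore l s` holds iff the load `l` reads its value from
the store `s`: `s` is the most recent store to the same variable taking effect
before `l` in the global memory order `<`. -/
def ReadsFrom {E V : Type*} [LinearOrder E] (var : E → V)
    (IsLoad IsStore : E → Prop) (l s : E) : Prop :=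
  IsLoad l ∧ IsStore s ∧ var s = var l ∧ s < l ∧
    ¬ ∃ s', IsStore s' ∧ var s' = var l ∧ s < s' ∧ s' < l

/-- Soundness of Rule (4) (the overwrite rule): if the load `l` reads from the
store `s1`, `s1` must happen before `s2`, and `s2` is a store to the same
variable as `l`, then `l` takes effect before `s2`. -/
theorem rule4_overwrite_sound {E V : Type*} [LinearOrder E] (var : E → V)
    (IsLoad IsStore : E → Prop)
    (hdisj : ∀ e : E, ¬ (IsLoad e ∧ IsStore e))
    (mhb : E → E → Prop) (hsound : ∀ x y, mhb x y → x < y)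
    (l s1 s2 : E)
    (hrf : ReadsFrom var IsLoad IsStore l s1)
    (hmhb : mhb s1 s2)
    (hs2 : IsStore s2)
    (hvar : var s2 = var l) :
    l < s2 := by
  obtain ⟨hl, hs1, hv1, hlt, hno⟩ := hrf
  have h12 : s1 < s2 := hsound _ _ hmhb
  by_contra h
  rcases lt_or_eq_of_le (le_of_not_gt h) with h' | h'
  · exact hno ⟨s2, hs2, hvar, h12, h'⟩
  · exact hdisj l ⟨hl, h' ▸ hs2⟩
end

section
/- In the abstract execution model, Rule (6) of the MustNotReadFrom deduction system is sound: for any sound relation mhb on events, if l1 and l2 are loads and s2 is a store with var l1 = var l2 = var s2, the load l1 reads from a store s1 (ReadsFrom l1 s1 holds), mhb l1 s2 holds, and mhb s2 l2 holds, then the load l2 does not read from s1, i.e., ReadsFrom l2 s1 is false. -/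
/-- Soundness of Rule (6): if the load `l1` reads from the store `s1`, `l1` must
happen before the store `s2`, and `s2` must happen before the load `l2`, where
`l1`, `l2`, `s2` all access the same variable, then `l2` cannot read from `s1`. -/
theorem rule6_mustNotReadFrom_sound {E V : Type*} [LinearOrder E] (var : E → V)
    (IsLoad IsStore : E → Prop)
    (hdisj : ∀ e : E, ¬ (IsLoad e ∧ IsStore e))
    (mhb : E → E → Prop) (hsound : ∀ x y, mhb x y → x < y)
    (l1 l2 s1 s2 : E)
    (hl1 : IsLoad l1) (hl2 : IsLoad l2) (hs2 : IsStore s2)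
    (hv1 : var l1 = var l2) (hv2 : var l2 = var s2)
    (hrf : ReadsFrom var IsLoad IsStore l1 s1)
    (hmhb1 : mhb l1 s2)
    (hmhb2 : mhb s2 l2) :
    ¬ ReadsFrom var IsLoad IsStore l2 s1 := by
  rintro ⟨_, _, _, hs1l2, hno⟩
  obtain ⟨_, _, _, hs1l1, _⟩ := hrf
  exact hno ⟨s2, hs2, hv2.symm, hs1l1.trans (hsound _ _ hmhb1), hsound _ _ hmhb2⟩
end

section
/- Soundness of the must-happen-before closure (the MHB part of Theorem 2): let mhb0 be a sound relation on events, and let R be the least binary relation on E such that (i) R contains mhb0, (ii) R is transitive, and (iii) whenever ReadsFrom l s1 holds, R s1 s2 holds, s2 is a store, and var s2 = var l, then R l s2 holds (the overwrite rule). Then R is itself sound: R x y implies x < y for all events x and y. -/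
/-- The least relation containing `mhb0`, closed under transitivity and the
overwrite rule (Rule (4)). -/
inductive MHBClosure {E V : Type*} [LinearOrder E] (var : E → V)
    (IsLoad IsStore : E → Prop) (mhb0 : E → E → Prop) : E → E → Prop
  | base {x y : E} : mhb0 x y → MHBClosure var IsLoad IsStore mhb0 x y
  | trans {x y z : E} : MHBClosure var IsLoad IsStore mhb0 x y →
      MHBClosure var IsLoad IsStore mhb0 y z →
      MHBClosure var IsLoad IsStore mhb0 x z
  | overwrite {l s1 s2 : E} : ReadsFrom var IsLoad IsStore l s1 →
      MHBClosure var IsLoad IsStore mhb0 s1 s2 → IsStore s2 → var s2 = var l →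
      MHBClosure var IsLoad IsStore mhb0 l s2

/-- Soundness of the must-happen-before closure: if the base relation `mhb0` is
sound (contained in the memory order `<`), then so is its closure under
transitivity and the overwrite rule. -/
theorem mhbClosure_sound {E V : Type*} [LinearOrder E] (var : E → V)
    (IsLoad IsStore : E → Prop)
    (hdisj : ∀ e : E, ¬ (IsLoad e ∧ IsStore e))
    (mhb0 : E → E → Prop) (hsound : ∀ x y, mhb0 x y → x < y) :
    ∀ x y, MHBClosure var IsLoad IsStore mhb0 x y → x < y := by
  intro x y h
  induction h with
  | base h => exact hsound _ _ h
  | trans _ _ ih1 ih2 => exact ih1.trans ih2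
  | @overwrite l s1 s2 hrf _ hs2 hv ih =>
    obtain ⟨hl, hs1, hv1, hlt, hmax⟩ := hrf
    rcases lt_trichotomy l s2 with h | h | h
    · exact h
    · exact absurd ⟨h ▸ hl, hs2⟩ (hdisj s2)
    · exact absurd ⟨s2, hs2, hv, ih, h⟩ hmax
end

section
/- Soundness of the deduced MustNotReadFrom relation (Theorem 2): let mhb0 be a sound relation on events, and let R be the least binary relation on E that contains mhb0, is transitive, and is closed under the overwrite rule (whenever ReadsFrom l s1 holds, R s1 s2 holds, s2 is a store, and var s2 = var l, then R l s2 holds). Define a pair (l, s) of a load l and a store s to be deduced-MustNotReadFrom if either (a) R l s holds, or (b) there exist a load l1 and a store s2 with var l1 = var l = var s2 such that ReadsFrom l1 s holds, R l1 s2 holds, and R s2 l holds. Then for every deduced-MustNotReadFrom pair (l, s), the load l does not read from the store s, i.e., ReadsFrom l s is false. -/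
/-- The pairs `(l, s)` deduced to be in `MustNotReadFrom` by Rules (5) and (6),
relative to the must-happen-before closure `R`. -/
def DeducedMustNotReadFrom {E V : Type*} [LinearOrder E] (var : E → V)
    (IsLoad IsStore : E → Prop) (mhb0 : E → E → Prop) (l s : E) : Prop :=
  IsLoad l ∧ IsStore s ∧
    (MHBClosure var IsLoad IsStore mhb0 l s ∨
      ∃ l1 s2 : E, IsLoad l1 ∧ IsStore s2 ∧ var l1 = var l ∧ var s2 = var l ∧
        ReadsFrom var IsLoad IsStore l1 s ∧
        MHBClosure var IsLoad IsStore mhb0 l1 s2 ∧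
        MHBClosure var IsLoad IsStore mhb0 s2 l)

theorem mhbClosure_lt {E V : Type*} [LinearOrder E] (var : E → V)
    (IsLoad IsStore : E → Prop)
    (hdisj : ∀ e : E, ¬ (IsLoad e ∧ IsStore e))
    (mhb0 : E → E → Prop) (hsound : ∀ x y, mhb0 x y → x < y)
    {x y : E} (h : MHBClosure var IsLoad IsStore mhb0 x y) : x < y := by
  induction h with
  | base h => exact hsound _ _ h
  | trans _ _ ih1 ih2 => exact ih1.trans ih2
  | overwrite hrf h12 hst hvar ih =>
      rename_i l s1 s2
      obtain ⟨hl, hs1, hv1, hlt, hno⟩ := hrf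
      rcases lt_trichotomy l s2 with h1 | h1 | h1
      · exact h1
      · exact absurd ⟨hl, h1 ▸ hst⟩ (hdisj _)
      · exact absurd ⟨_, hst, hvar, ih, h1⟩ hno

/-- Theorem 2 (soundness of the deduced `MustNotReadFrom` relation): if `mhb0`
is sound, then any pair `(l, s)` deduced to be in `MustNotReadFrom` is indeed an
impossible store-to-load data flow: `l` does not read from `s`. -/
theorem deducedMustNotReadFrom_sound {E V : Type*} [LinearOrder E] (var : E → V)
    (IsLoad IsStore : E → Prop)
    (hdisj : ∀ e : E, ¬ (IsLoad e ∧ IsStore e))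
    (mhb0 : E → E → Prop) (hsound : ∀ x y, mhb0 x y → x < y)
    (l s : E)
    (h : DeducedMustNotReadFrom var IsLoad IsStore mhb0 l s) :
    ¬ ReadsFrom var IsLoad IsStore l s := by
  rintro ⟨hl, hs, hvar, hslt, hno⟩
  obtain ⟨-, -, hR | ⟨l1, s2, hl1, hs2, hv1, hv2, hrf1, hR1, hR2⟩⟩ := h
  · exact absurd (mhbClosure_lt var IsLoad IsStore hdisj mhb0 hsound hR) (not_lt.2 hslt.le)
  · have h1 := mhbClosure_lt var IsLoad IsStore hdisj mhb0 hsound hR1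
    have h2 := mhbClosure_lt var IsLoad IsStore hdisj mhb0 hsound hR2
    exact hno ⟨s2, hs2, hv2, hrf1.2.2.2.1.trans h1, h2⟩
end
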